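/- arXiv:2111.11972 — 3 statements merged into one kernel-verified Lean document; each statement's English description precedes it below -/
import Mathlib

section
/- For each D>0 there exists a constant C̃(D)>0 such that for every τ ∈ (0,1], every m ∈ P(𝕋^d), and all x,y ∈ ℝ^d with |x−y| ≤ τD, one has |h_τ^m(x,y) − 𝓛_{τ,m}(x,y)| ≤ τ² C̃(D). -/
open MeasureTheory Set Filter

noncomputable section

instance fact_zero_lt_one : Fact ((0:ℝ) < 1) := ⟨one_pos⟩

/-- Euclidean space `ℝ^d`. -/
abbrev Rd (d : ℕ) : Type := EuclideanSpace ℝ (Fin d)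

/-- The flat torus `𝕋^d = ℝ^d/ℤ^d`. -/
abbrev Torus (d : ℕ) : Type := Fin d → AddCircle (1:ℝ)

/-- Interpret a bare function `Fin d → ℝ` as a point of `ℝ^d`. -/
def toRd {d : ℕ} (f : Fin d → ℝ) : Rd d := (WithLp.equiv 2 (Fin d → ℝ)).symm f

/-- Canonical projection `π : ℝ^d → 𝕋^d`. -/
def projT {d : ℕ} (x : Rd d) : Torus d := fun i => (x i : AddCircle (1:ℝ))

/-- A lift `𝕋^d → ℝ^d` with coordinates in `[0,1)`. -/
def liftT {d : ℕ} (x : Torus d) : Rd d := toRd fun i => (AddCircle.equivIco 1 0 (x i)).1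

/-- `ℤ^d`-periodicity of a function on `ℝ^d`. -/
def ZPer {d : ℕ} {α : Type*} (φ : Rd d → α) : Prop :=
  ∀ (x : Rd d) (k : Fin d → ℤ), φ (x + toRd fun i => (k i : ℝ)) = φ x

/-- (L1): `∂²L/∂v²(x,v)` is positive definite. -/
def TonelliL1 {d : ℕ} (L : Torus d → Rd d → ℝ) : Prop :=
  ∀ (x : Torus d) (v w : Rd d), w ≠ 0 →
    0 < iteratedFDeriv ℝ 2 (fun v' => L x v') v ![w, w]

/-- (L2): superlinearity of `L` in `v`. -/
def TonelliL2 {d : ℕ} (L : Torus d → Rd d → ℝ) : Prop :=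
  ∀ K : ℝ, 0 < K → ∃ C : ℝ, ∀ (x : Torus d) (v : Rd d), K * ‖v‖ + C ≤ L x v

/-- `L` is `C²` (viewed through the covering `ℝ^d × ℝ^d → 𝕋^d × ℝ^d`). -/
def TonelliC2 {d : ℕ} (L : Torus d → Rd d → ℝ) : Prop :=
  ContDiff ℝ 2 (fun q : Rd d × Rd d => L (projT q.1) q.2)

/-- Borel probability measures on the torus, with the weak-* topology. -/
abbrev PT (d : ℕ) := ProbabilityMeasure (Torus d)

/-- Integral of `f` against a probability measure. -/
def intPM {X : Type*} [MeasurableSpace X] (μ : ProbabilityMeasure X) (f : X → ℝ) : ℝ :=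
  ∫ x, f x ∂(μ : Measure X)

/-- (F1): uniform `C²` bounds for the coupling. -/
def CouplingF1 {d : ℕ} (F : Torus d → PT d → ℝ) (Finf : ℝ) : Prop :=
  0 < Finf ∧ ∀ m : PT d,
    ContDiff ℝ 2 (fun x : Rd d => F (projT x) m) ∧
    (∀ x : Torus d, |F x m| ≤ Finf) ∧
    (∀ x : Rd d, ‖fderiv ℝ (fun x' : Rd d => F (projT x') m) x‖ ≤ Finf)

/-- The Kantorovich–Rubinstein distance `d₁`. -/
def d1 {d : ℕ} (m₁ m₂ : PT d) : ℝ :=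
  sSup { r : ℝ | ∃ g : Torus d → ℝ, LipschitzWith 1 g ∧ r = |intPM m₁ g - intPM m₂ g| }

/-- (F2): continuity of `F` and `D_xF` on `𝕋^d × P(𝕋^d)`. -/
def CouplingF2 {d : ℕ} (F : Torus d → PT d → ℝ) : Prop :=
  Continuous (fun q : Torus d × PT d => F q.1 q.2) ∧
  Continuous (fun q : Rd d × PT d => fderiv ℝ (fun x : Rd d => F (projT x) q.2) q.1)

/-- (F3): Lipschitz continuity of `F` in the measure variable. -/
def CouplingF3 {d : ℕ} (F : Torus d → PT d → ℝ) (LipF : ℝ) : Prop :=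
  0 < LipF ∧ ∀ (x : Torus d) (m₁ m₂ : PT d), |F x m₁ - F x m₂| ≤ LipF * d1 m₁ m₂

/-- The Lagrangian `L_m(x,v) = L(x,v) + F(x,m)` on the torus. -/
def LmT {d : ℕ} (L : Torus d → Rd d → ℝ) (F : Torus d → PT d → ℝ) (m : PT d) :
    Torus d → Rd d → ℝ := fun x v => L x v + F x m

/-- The Lagrangian `L_m` lifted to `ℝ^d`. -/
def LmR {d : ℕ} (L : Torus d → Rd d → ℝ) (F : Torus d → PT d → ℝ) (m : PT d) :
    Rd d → Rd d → ℝ := fun x v => LmT L F m (projT x) v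

/-- A continuous, piecewise `C¹` curve on `[0,t]`. -/
def PiecewiseC1On {d : ℕ} (γ : ℝ → Rd d) (t : ℝ) : Prop :=
  ContinuousOn γ (Icc 0 t) ∧
  ∃ (n : ℕ) (s : Fin (n + 1) → ℝ), StrictMono s ∧ s 0 = 0 ∧ s (Fin.last n) = t ∧
    ∀ i : Fin n, ContDiffOn ℝ 1 γ (Icc (s i.castSucc) (s i.succ))

/-- The action `∫₀ᵗ Lag(γ, γ̇) ds` of a curve. -/
def curveAction {d : ℕ} (Lag : Rd d → Rd d → ℝ) (t : ℝ) (γ : ℝ → Rd d) : ℝ :=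
  ∫ s in Icc (0:ℝ) t, Lag (γ s) (deriv γ s)

/-- The minimal action `h_t(x,y)`. -/
def minAction {d : ℕ} (Lag : Rd d → Rd d → ℝ) (t : ℝ) (x y : Rd d) : ℝ :=
  sInf { a : ℝ | ∃ γ : ℝ → Rd d, PiecewiseC1On γ t ∧ γ 0 = x ∧ γ t = y ∧
    a = curveAction Lag t γ }

/-- The discrete action `𝓛_{τ,m}(x,y) = τ(L(x,(y−x)/τ) + F(x,m))`. -/
def discAction {d : ℕ} (L : Torus d → Rd d → ℝ) (F : Torus d → PT d → ℝ)
    (τ : ℝ) (m : PT d) (x y : Rd d) : ℝ :=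
  τ * (L (projT x) (τ⁻¹ • (y - x)) + F (projT x) m)

/-- `τ`-holonomic probability measures on `𝕋^d × ℝ^d`. -/
def Holonomic {d : ℕ} (τ : ℝ) (μ : ProbabilityMeasure (Torus d × Rd d)) : Prop :=
  ∀ φ : Torus d → ℝ, Continuous φ →
    intPM μ (fun p => φ (p.1 + projT (τ • p.2))) = intPM μ (fun p => φ p.1)

/-- `L̄(τ,m)`: infimum of `∫ L_m dμ` over `τ`-holonomic measures. -/
def LbarV {d : ℕ} (L : Torus d → Rd d → ℝ) (F : Torus d → PT d → ℝ) (τ : ℝ) (m : PT d) : ℝ :=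
  sInf { r : ℝ | ∃ μ : ProbabilityMeasure (Torus d × Rd d), Holonomic τ μ ∧
    r = intPM μ (fun p => LmT L F m p.1 p.2) }

/-- Minimizing `τ`-holonomic measure for `L_m`. -/
def MinHolonomic {d : ℕ} (L : Torus d → Rd d → ℝ) (F : Torus d → PT d → ℝ)
    (τ : ℝ) (m : PT d) (μ : ProbabilityMeasure (Torus d × Rd d)) : Prop :=
  Holonomic τ μ ∧ intPM μ (fun p => LmT L F m p.1 p.2) = LbarV L F τ m

/-- Support of a measure. -/
def msupport {X : Type*} [TopologicalSpace X] [MeasurableSpace X] (μ : Measure X) : Set X :=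
  { x | ∀ U : Set X, IsOpen U → x ∈ U → 0 < μ U }

/-- The pushforward `π♯μ` of a measure on `𝕋^d × ℝ^d` under the canonical projection. -/
def pushFst {d : ℕ} (μ : ProbabilityMeasure (Torus d × Rd d)) : Measure (Torus d) :=
  (μ : Measure (Torus d × Rd d)).map Prod.fst

/-- Closed probability measures on `𝕋^d × ℝ^d`. -/
def IsClosedMeasure {d : ℕ} (μ : ProbabilityMeasure (Torus d × Rd d)) : Prop :=
  Integrable (fun p : Torus d × Rd d => ‖p.2‖) (μ : Measure (Torus d × Rd d)) ∧
  ∀ φ : Rd d → ℝ, ContDiff ℝ 1 φ → ZPer φ →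
    intPM μ (fun p => fderiv ℝ φ (liftT p.1) p.2) = 0

/-- The Mañé critical value `c(m) = −inf{∫ L_m dμ : μ closed}`. -/
def maneC {d : ℕ} (L : Torus d → Rd d → ℝ) (F : Torus d → PT d → ℝ) (m : PT d) : ℝ :=
  - sInf { r : ℝ | ∃ μ : ProbabilityMeasure (Torus d × Rd d), IsClosedMeasure μ ∧
      r = intPM μ (fun p => LmT L F m p.1 p.2) }

/-- The Hamiltonian `H(x,p) = sup_v (⟨p,v⟩ − L(x,v))`. -/
def Ham {d : ℕ} (L : Torus d → Rd d → ℝ) (x : Torus d) (p : Rd d) : ℝ :=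
  sSup { r : ℝ | ∃ v : Rd d, r = inner ℝ p v - L x v }

/-- `∂H/∂p(x,p)`, as the gradient of `H(x,·)`. -/
def HamP {d : ℕ} (L : Torus d → Rd d → ℝ) (x : Torus d) (p : Rd d) : Rd d :=
  gradient (fun q => Ham L x q) p

/-- Viscosity solution of `H(x,Du) = G(x)` for a `ℤ^d`-periodic continuous `u`. -/
def IsViscositySol {d : ℕ} (L : Torus d → Rd d → ℝ) (G : Torus d → ℝ) (u : Rd d → ℝ) : Prop :=
  (∀ φ : Rd d → ℝ, ContDiff ℝ 1 φ → ∀ x₀ : Rd d,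
      IsLocalMax (fun x => u x - φ x) x₀ →
      Ham L (projT x₀) (gradient φ x₀) ≤ G (projT x₀)) ∧
  (∀ ψ : Rd d → ℝ, ContDiff ℝ 1 ψ → ∀ y₀ : Rd d,
      IsLocalMin (fun x => u x - ψ x) y₀ →
      G (projT y₀) ≤ Ham L (projT y₀) (gradient ψ y₀))

/-!
Put `v = (y - x) / τ`, so `‖v‖ ≤ D`. By periodicity in `x` and compactness, `L`, `DL` and `D²L` are
bounded on `{‖v‖ ≤ D}`, so `L_m(·, v)` and `∂ᵥL(·, v)` are Lipschitz there, uniformly in `m`.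
The segment `t ↦ x + t v` then has action at most `τ L_m(x, v) + O(τ²)`. Conversely, by
superlinearity a curve with action below `τ L_m(x, v)` has length `O(τ)`, hence stays `O(τ)`-close
to `x`. Convexity of `L(z, ·)` gives `L_m(γ, γ̇) ≥ L_m(γ, v) + ∂ᵥL(γ, v)(γ̇ - v)`; moving the base
point of both terms to `x` costs `O(τ)(1 + ‖γ̇‖)`, and the remaining linear term integrates to
`∂ᵥL(x, v)(y - x - τ v) = 0`.
-/

open Metric Function Topology

theorem Function.Periodic.fderiv {𝕜 E F : Type*} [NontriviallyNormedField 𝕜]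
    [NormedAddCommGroup E] [NormedSpace 𝕜 E] [NormedAddCommGroup F] [NormedSpace 𝕜 F]
    {f : E → F} {c : E} (h : Periodic f c) : Periodic (fderiv 𝕜 f) c := fun q => by
  rw [← fderiv_comp_add_right, funext h]

theorem norm_sub_le_of_norm_fderiv_le_left {E G H : Type*} [NormedAddCommGroup E]
    [NormedSpace ℝ E] [NormedAddCommGroup G] [NormedSpace ℝ G] [NormedAddCommGroup H]
    [NormedSpace ℝ H] {f : E × G → H} (hf : Differentiable ℝ f) {v : G} {M : ℝ}
    (hM : ∀ z, ‖fderiv ℝ f (z, v)‖ ≤ M) (z z' : E) : ‖f (z', v) - f (z, v)‖ ≤ M * ‖z' - z‖ := by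
  have hderiv : ∀ w, HasFDerivAt (fun z => f (z, v))
      ((fderiv ℝ f (w, v)).comp (ContinuousLinearMap.inl ℝ E G)) w := fun w =>
    (hf (w, v)).hasFDerivAt.comp w (hasFDerivAt_prodMk_left w v)
  refine convex_univ.norm_image_sub_le_of_norm_fderiv_le (fun w _ => (hderiv w).differentiableAt)
    (fun w _ => ?_) (mem_univ z) (mem_univ z')
  rw [(hderiv w).fderiv]
  exact (ContinuousLinearMap.opNorm_comp_le _ _).trans <|
    (mul_le_of_le_one_right (norm_nonneg _) (ContinuousLinearMap.norm_inl_le_one ℝ E G)).trans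
      (hM w)

theorem add_fderiv_sub_le_of_iteratedFDeriv_two_nonneg {E : Type*} [NormedAddCommGroup E]
    [NormedSpace ℝ E] {h : E → ℝ} (hh : ContDiff ℝ 2 h)
    (hpos : ∀ v w, 0 ≤ iteratedFDeriv ℝ 2 h v ![w, w]) (v u : E) :
    h v + fderiv ℝ h v (u - v) ≤ h u := by
  set c : ℝ → E := fun t => v + t • (u - v)
  have hc : ∀ t, HasDerivAt c (u - v) t := fun t => by
    simpa only [one_smul] using ((hasDerivAt_id' t).smul_const (u - v)).const_add v
  have hD1 : ContDiff ℝ 1 (fderiv ℝ h) := hh.fderiv_right le_rfl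
  have hφ : ∀ t, HasDerivAt (h ∘ c) (fderiv ℝ h (c t) (u - v)) t := fun t =>
    ((hh.differentiable two_ne_zero (c t)).hasFDerivAt).comp_hasDerivAt t (hc t)
  have hmono : Monotone fun t => fderiv ℝ h (c t) (u - v) := by
    have hψ : ∀ t, HasDerivAt (fun t => fderiv ℝ h (c t) (u - v))
        (fderiv ℝ (fderiv ℝ h) (c t) (u - v) (u - v)) t := fun t =>
      ((ContinuousLinearMap.apply ℝ ℝ (u - v)).hasFDerivAt).comp_hasDerivAt t
        (((hD1.differentiable one_ne_zero (c t)).hasFDerivAt).comp_hasDerivAt t (hc t))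
    refine monotone_of_deriv_nonneg (fun t => (hψ t).differentiableAt) fun t => ?_
    rw [(hψ t).deriv]
    simpa [iteratedFDeriv_two_apply] using hpos (c t) (u - v)
  obtain ⟨ξ, hξ, hslope⟩ := exists_hasDerivAt_eq_slope (h ∘ c) _ one_pos
    (fun t _ => (hφ t).continuousAt.continuousWithinAt) fun t _ => hφ t
  have := hmono hξ.1.le
  simp only [comp_apply, c, zero_smul, add_zero, one_smul, add_sub_cancel, sub_zero, div_one]
    at hslope this
  linarith

section Periodic

variable {d : ℕ}

theorem projT_add_intCast (z : Rd d) (k : Fin d → ℤ) :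
    projT (z + toRd fun i => (k i : ℝ)) = projT z := by
  funext i
  simp [projT, toRd]

theorem exists_norm_sub_intCast_le (z : Rd d) :
    ∃ k : Fin d → ℤ, ‖z - toRd fun i => (k i : ℝ)‖ ≤ √d := by
  refine ⟨fun i => ⌊z i⌋, ?_⟩
  rw [EuclideanSpace.norm_eq]
  refine Real.sqrt_le_sqrt ?_
  calc ∑ i, ‖(z - toRd fun i => (⌊z i⌋ : ℝ)) i‖ ^ 2 ≤ ∑ _i : Fin d, (1 : ℝ) := by
        refine Finset.sum_le_sum fun i _ => ?_
        have h : (z - toRd fun i => (⌊z i⌋ : ℝ)) i = Int.fract (z i) := rfl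
        rw [h, Real.norm_of_nonneg (Int.fract_nonneg _)]
        exact pow_le_one₀ (Int.fract_nonneg _) (Int.fract_lt_one _).le
    _ = d := by simp

theorem exists_bound_of_periodic {E : Type*} [NormedAddCommGroup E] {f : Rd d × Rd d → E}
    (hf : Continuous f) (hper : ∀ k : Fin d → ℤ, Periodic f (toRd fun i => (k i : ℝ), 0))
    (D : ℝ) : ∃ M, 0 ≤ M ∧ ∀ z v, ‖v‖ ≤ D → ‖f (z, v)‖ ≤ M := by
  obtain ⟨M, hM⟩ := ((isCompact_closedBall (0 : Rd d) √d).prod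
    (isCompact_closedBall (0 : Rd d) D)).exists_bound_of_continuousOn hf.continuousOn
  refine ⟨max M 0, le_max_right _ _, fun z v hv => ?_⟩
  obtain ⟨k, hk⟩ := exists_norm_sub_intCast_le z
  have hshift : f (z, v) = f (z - toRd fun i => (k i : ℝ), v) :=
    calc f (z, v) = f ((z - toRd fun i => (k i : ℝ), v) + (toRd fun i => (k i : ℝ), 0)) := by
          rw [Prod.mk_add_mk, sub_add_cancel, add_zero]
      _ = _ := hper k _
  rw [hshift]
  have hmem : (z - toRd fun i => (k i : ℝ), v) ∈ closedBall (0 : Rd d) √d ×ˢ closedBall 0 D :=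
    ⟨mem_closedBall_zero_iff.mpr hk, mem_closedBall_zero_iff.mpr hv⟩
  exact (hM _ hmem).trans (le_max_left _ _)

end Periodic

theorem exists_mem_Ioo_of_monotone {α : Type*} [LinearOrder α] :
    ∀ {n : ℕ} {s : Fin (n + 1) → α}, Monotone s → ∀ {t : α}, s 0 ≤ t → t ≤ s (Fin.last n) →
      t ∉ range s → ∃ i : Fin n, t ∈ Ioo (s i.castSucc) (s i.succ)
  | 0, s, _, t, h0, hlast, hnot => (hnot ⟨0, le_antisymm h0 hlast⟩).elim
  | n + 1, s, hs, t, h0, hlast, hnot => by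
    by_cases ht : t ≤ s (Fin.last n).castSucc
    · obtain ⟨i, hi⟩ := exists_mem_Ioo_of_monotone (s := s ∘ Fin.castSucc)
        (hs.comp Fin.strictMono_castSucc.monotone) h0 ht (fun ⟨j, hj⟩ => hnot ⟨_, hj⟩)
      refine ⟨i.castSucc, ?_⟩
      rwa [Fin.succ_castSucc]
    · refine ⟨Fin.last n, not_le.mp ht, ?_⟩
      rw [Fin.succ_last]
      exact lt_of_le_of_ne hlast fun h => hnot ⟨_, h.symm⟩

namespace PiecewiseC1On

variable {d : ℕ} {γ : ℝ → Rd d} {τ : ℝ}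

theorem exists_finite_hasDerivAt_bound (hγ : PiecewiseC1On γ τ) :
    ∃ S : Set ℝ, S.Finite ∧ ∃ B : ℝ,
      ∀ t ∈ Icc 0 τ \ S, HasDerivAt γ (deriv γ t) t ∧ ‖deriv γ t‖ ≤ B := by
  obtain ⟨-, n, s, hs, hs0, hsl, hpiece⟩ := hγ
  have hbound : ∀ i : Fin n, ∃ B : ℝ, ∀ t ∈ Icc (s i.castSucc) (s i.succ),
      ‖derivWithin γ (Icc (s i.castSucc) (s i.succ)) t‖ ≤ B := fun i =>
    isCompact_Icc.exists_bound_of_continuousOn <| (hpiece i).continuousOn_derivWithin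
      (uniqueDiffOn_Icc (hs Fin.castSucc_lt_succ)) le_rfl
  choose B hB using hbound
  obtain ⟨B', hB'⟩ := Finite.bddAbove_range B
  refine ⟨range s, finite_range s, B', fun t ⟨ht, hts⟩ => ?_⟩
  obtain ⟨i, hi⟩ := exists_mem_Ioo_of_monotone hs.monotone (hs0 ▸ ht.1) (hsl ▸ ht.2) hts
  have hnhds : Icc (s i.castSucc) (s i.succ) ∈ 𝓝 t := Icc_mem_nhds hi.1 hi.2
  have hderiv : HasDerivAt γ (deriv γ t) t :=
    (((hpiece i).differentiableOn one_ne_zero t (Ioo_subset_Icc_self hi)).differentiableAt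
      hnhds).hasDerivAt
  refine ⟨hderiv, ?_⟩
  rw [← derivWithin_of_mem_nhds hnhds]
  exact (hB i t (Ioo_subset_Icc_self hi)).trans (hB' ⟨i, rfl⟩)

theorem integrableOn_comp {E : Type*} [NormedAddCommGroup E] (hγ : PiecewiseC1On γ τ)
    {G : Rd d × Rd d → E} (hG : Continuous G) :
    IntegrableOn (fun t => G (γ t, deriv γ t)) (Icc 0 τ) := by
  obtain ⟨S, hS, B, hB⟩ := hγ.exists_finite_hasDerivAt_bound
  obtain ⟨M, hM⟩ := ((isCompact_Icc.image_of_continuousOn hγ.1).prod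
    (isCompact_closedBall (0 : Rd d) B)).exists_bound_of_continuousOn hG.continuousOn
  have hmeas : AEStronglyMeasurable (fun t => G (γ t, deriv γ t)) (volume.restrict (Icc 0 τ)) :=
    hG.comp_aestronglyMeasurable ((hγ.1.aestronglyMeasurable measurableSet_Icc).prodMk
      (measurable_deriv γ).aestronglyMeasurable)
  refine Integrable.mono' (g := fun _ => M) (integrableOn_const measure_Icc_lt_top.ne) hmeas ?_
  filter_upwards [ae_restrict_mem measurableSet_Icc,
    ae_restrict_of_ae (hS.countable.ae_notMem volume)] with t ht htS
  exact hM _ ⟨mem_image_of_mem γ ht, mem_closedBall_zero_iff.mpr (hB t ⟨ht, htS⟩).2⟩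

theorem integral_deriv_eq_sub (hγ : PiecewiseC1On γ τ) {u : ℝ} (hu : u ∈ Icc 0 τ) :
    ∫ t in (0 : ℝ)..u, deriv γ t = γ u - γ 0 := by
  obtain ⟨S, hS, _, hB⟩ := hγ.exists_finite_hasDerivAt_bound
  refine integral_eq_of_hasDerivAt_off_countable_of_le _ _ hu.1 hS.countable
    (hγ.1.mono (Icc_subset_Icc_right hu.2))
    (fun t ⟨ht, htS⟩ => (hB t ⟨⟨ht.1.le, ht.2.le.trans hu.2⟩, htS⟩).1) ?_
  exact (intervalIntegrable_iff_integrableOn_Icc_of_le hu.1).mpr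
    ((hγ.integrableOn_comp continuous_snd).mono_set (Icc_subset_Icc_right hu.2))

theorem setIntegral_deriv_eq_sub (hγ : PiecewiseC1On γ τ) (hτ : 0 ≤ τ) :
    ∫ t in Icc 0 τ, deriv γ t = γ τ - γ 0 := by
  rw [integral_Icc_eq_integral_Ioc, ← intervalIntegral.integral_of_le hτ,
    hγ.integral_deriv_eq_sub ⟨hτ, le_rfl⟩]

theorem norm_sub_le_integral_norm_deriv (hγ : PiecewiseC1On γ τ) {u : ℝ} (hu : u ∈ Icc 0 τ) :
    ‖γ u - γ 0‖ ≤ ∫ t in Icc 0 τ, ‖deriv γ t‖ :=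
  calc ‖γ u - γ 0‖ = ‖∫ t in (0 : ℝ)..u, deriv γ t‖ := by rw [hγ.integral_deriv_eq_sub hu]
    _ ≤ ∫ t in (0 : ℝ)..u, ‖deriv γ t‖ := intervalIntegral.norm_integral_le_integral_norm hu.1
    _ = ∫ t in Ioc 0 u, ‖deriv γ t‖ := intervalIntegral.integral_of_le hu.1
    _ ≤ ∫ t in Icc 0 τ, ‖deriv γ t‖ :=
      setIntegral_mono_set (hγ.integrableOn_comp continuous_snd.norm)
        (ae_of_all _ fun _ => norm_nonneg _)
        (Ioc_subset_Icc_self.trans (Icc_subset_Icc_right hu.2)).eventuallyLE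

end PiecewiseC1On

section Action

variable {d : ℕ} {Lag : Rd d → Rd d → ℝ} {τ : ℝ} {γ : ℝ → Rd d} {x y v : Rd d}

theorem PiecewiseC1On.setIntegral_le_curveAction (hγ : PiecewiseC1On γ τ)
    (hLag : Continuous (uncurry Lag)) {G : Rd d × Rd d → ℝ} (hG : Continuous G)
    (hle : ∀ t ∈ Icc 0 τ, G (γ t, deriv γ t) ≤ Lag (γ t) (deriv γ t)) :
    ∫ t in Icc 0 τ, G (γ t, deriv γ t) ≤ curveAction Lag τ γ :=
  setIntegral_mono_on (hγ.integrableOn_comp hG) (hγ.integrableOn_comp hLag) measurableSet_Icc hle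

theorem PiecewiseC1On.setIntegral_add_clm_sub_mul_norm (hγ : PiecewiseC1On γ τ) (hτ : 0 ≤ τ)
    (a b : ℝ) (p : Rd d →L[ℝ] ℝ) :
    ∫ t in Icc 0 τ, (a + p (deriv γ t) - b * ‖deriv γ t‖) =
      τ * a + p (γ τ - γ 0) - b * ∫ t in Icc 0 τ, ‖deriv γ t‖ := by
  have hp : IntegrableOn (fun t => p (deriv γ t)) (Icc 0 τ) :=
    hγ.integrableOn_comp (G := fun q => p q.2) (by fun_prop)
  have hnorm : IntegrableOn (fun t => ‖deriv γ t‖) (Icc 0 τ) :=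
    hγ.integrableOn_comp continuous_snd.norm
  have hconst : IntegrableOn (fun _ => a) (Icc 0 τ) := integrableOn_const measure_Icc_lt_top.ne
  rw [integral_sub (f := fun t => a + p (deriv γ t)) (hconst.add hp) (hnorm.const_mul b),
    integral_add hconst hp, integral_const_mul,
    p.integral_comp_comm (hγ.integrableOn_comp continuous_snd),
    hγ.setIntegral_deriv_eq_sub hτ]
  simp [hτ]

theorem deriv_const_add_smul (x v : Rd d) (t : ℝ) : deriv (fun s : ℝ => x + s • v) t = v := by
  simpa using (((hasDerivAt_id t).smul_const v).const_add x).deriv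

theorem piecewiseC1On_const_add_smul (x v : Rd d) (hτ : 0 < τ) :
    PiecewiseC1On (fun t => x + t • v) τ :=
  ⟨by fun_prop, 1, ![0, τ], by simpa [Fin.strictMono_iff_lt_succ] using hτ, rfl, rfl,
    fun _ => (contDiff_const.add (contDiff_id.smul contDiff_const)).contDiffOn⟩

theorem minAction_le_curveAction (hLag : Continuous (uncurry Lag)) {c : ℝ}
    (hc : ∀ z u, c ≤ Lag z u) (hγ : PiecewiseC1On γ τ) (hγ0 : γ 0 = x) (hγτ : γ τ = y) :
    minAction Lag τ x y ≤ curveAction Lag τ γ := by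
  refine csInf_le ⟨∫ _ in Icc 0 τ, c, ?_⟩ ⟨γ, hγ, hγ0, hγτ, rfl⟩
  rintro a ⟨γ', hγ', -, -, rfl⟩
  exact hγ'.setIntegral_le_curveAction hLag (G := fun _ => c) continuous_const fun t _ => hc _ _

theorem le_minAction (hτ : 0 < τ) {a : ℝ}
    (h : ∀ γ, PiecewiseC1On γ τ → γ 0 = x → γ τ = y → a ≤ curveAction Lag τ γ) :
    a ≤ minAction Lag τ x y := by
  refine le_csInf ⟨_, _, piecewiseC1On_const_add_smul x (τ⁻¹ • (y - x)) hτ, ?_, ?_, rfl⟩ ?_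
  · simp
  · simp [smul_inv_smul₀ hτ.ne']
  · rintro b ⟨γ, hγ, hγ0, hγτ, rfl⟩
    exact h γ hγ hγ0 hγτ

end Action

section ShortTime

variable {d : ℕ} {Lag : Rd d → Rd d → ℝ} {τ : ℝ} {x v : Rd d} {K₁ K₂ : ℝ}

theorem curveAction_const_add_smul_le (hLag : Continuous (uncurry Lag)) (hτ : 0 ≤ τ)
    (hK₁ : 0 ≤ K₁) (hlip : ∀ z, Lag z v ≤ Lag x v + K₁ * ‖z - x‖) :
    curveAction Lag τ (fun t => x + t • v) ≤ τ * Lag x v + τ ^ 2 * (K₁ * ‖v‖) := by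
  have hcont : Continuous fun t : ℝ => Lag (x + t • v) v :=
    hLag.comp (by fun_prop : Continuous fun t : ℝ => (x + t • v, v))
  calc curveAction Lag τ (fun t => x + t • v) = ∫ t in Icc 0 τ, Lag (x + t • v) v := by
        simp only [curveAction, deriv_const_add_smul]
    _ ≤ ∫ _ in Icc 0 τ, (Lag x v + K₁ * (τ * ‖v‖)) := by
        refine setIntegral_mono_on hcont.integrableOn_Icc
          (integrableOn_const measure_Icc_lt_top.ne) measurableSet_Icc fun t ht => ?_
        refine (hlip _).trans ?_
        rw [add_sub_cancel_left, norm_smul, Real.norm_of_nonneg ht.1]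
        gcongr
        exact ht.2
    _ = τ * Lag x v + τ ^ 2 * (K₁ * ‖v‖) := by
        rw [setIntegral_const, Real.volume_real_Icc_of_le hτ, sub_zero, smul_eq_mul]
        ring

theorem le_of_support_of_norm_sub_le {p : Rd d → Rd d →L[ℝ] ℝ} {ρ : ℝ} (hK₁ : 0 ≤ K₁)
    (hK₂ : 0 ≤ K₂) (hsupp : ∀ z u, Lag z v + p z (u - v) ≤ Lag z u)
    (hlip : ∀ z, Lag x v ≤ Lag z v + K₁ * ‖z - x‖) (hp : ∀ z, ‖p z - p x‖ ≤ K₂ * ‖z - x‖)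
    {z : Rd d} (hz : ‖z - x‖ ≤ ρ) (u : Rd d) :
    Lag x v + p x (u - v) - K₁ * ρ - K₂ * ρ * (‖u‖ + ‖v‖) ≤ Lag z u := by
  have hp_near : |p z (u - v) - p x (u - v)| ≤ K₂ * ρ * (‖u‖ + ‖v‖) :=
    calc |p z (u - v) - p x (u - v)| = ‖(p z - p x) (u - v)‖ := rfl
      _ ≤ ‖p z - p x‖ * ‖u - v‖ := (p z - p x).le_opNorm _
      _ ≤ K₂ * ρ * (‖u‖ + ‖v‖) :=
        mul_le_mul ((hp z).trans (by gcongr)) (norm_sub_le u v) (norm_nonneg _)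
          (mul_nonneg hK₂ ((norm_nonneg _).trans hz))
  have hLag_near : Lag x v - K₁ * ρ ≤ Lag z v := by
    nlinarith [hlip z, mul_le_mul_of_nonneg_left hz hK₁]
  linarith [hsupp z u, (abs_le.mp hp_near).1]

theorem le_curveAction_of_support {p : Rd d → Rd d →L[ℝ] ℝ} {c₀ R : ℝ}
    (hLag : Continuous (uncurry Lag)) (hcoer : ∀ z u, ‖u‖ + c₀ ≤ Lag z u)
    (hsupp : ∀ z u, Lag z v + p z (u - v) ≤ Lag z u)
    (hlip : ∀ z, Lag x v ≤ Lag z v + K₁ * ‖z - x‖) (hp : ∀ z, ‖p z - p x‖ ≤ K₂ * ‖z - x‖)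
    (hK₁ : 0 ≤ K₁) (hK₂ : 0 ≤ K₂) (hR : Lag x v - c₀ ≤ R) (hτ : 0 < τ)
    {γ : ℝ → Rd d} (hγ : PiecewiseC1On γ τ) (hγ0 : γ 0 = x) (hγτ : γ τ = x + τ • v) :
    τ * Lag x v - τ ^ 2 * (K₁ * R + K₂ * R * (R + ‖v‖)) ≤ curveAction Lag τ γ := by
  have hvR : ‖v‖ ≤ R := by linarith [hcoer x v]
  have hR0 : 0 ≤ R := (norm_nonneg v).trans hvR
  by_cases hcase : τ * Lag x v ≤ curveAction Lag τ γ
  · have : 0 ≤ τ ^ 2 * (K₁ * R + K₂ * R * (R + ‖v‖)) := by positivity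
    linarith
  set ℓ := ∫ t in Icc 0 τ, ‖deriv γ t‖
  have hlen : ℓ + τ * c₀ ≤ curveAction Lag τ γ := by
    have := hγ.setIntegral_le_curveAction hLag (G := fun q => ‖q.2‖ + c₀) (by fun_prop)
      fun t _ => hcoer _ _
    rw [integral_add (hγ.integrableOn_comp continuous_snd.norm)
      (integrableOn_const measure_Icc_lt_top.ne), setIntegral_const] at this
    simpa [hτ.le] using this
  have hℓ : ℓ ≤ τ * R := by nlinarith
  set a := Lag x v - p x v - K₁ * (τ * R) - K₂ * (τ * R) * ‖v‖
  have hpointwise : ∀ t ∈ Icc 0 τ,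
      a + p x (deriv γ t) - K₂ * (τ * R) * ‖deriv γ t‖ ≤ Lag (γ t) (deriv γ t) := by
    intro t ht
    have hz : ‖γ t - x‖ ≤ τ * R := by
      rw [← hγ0]
      exact (hγ.norm_sub_le_integral_norm_deriv ht).trans hℓ
    have := le_of_support_of_norm_sub_le hK₁ hK₂ hsupp hlip hp hz (deriv γ t)
    rw [map_sub] at this
    linarith
  have hint := hγ.setIntegral_le_curveAction hLag
    (G := fun q => a + p x q.2 - K₂ * (τ * R) * ‖q.2‖) (by fun_prop) hpointwise
  rw [hγ.setIntegral_add_clm_sub_mul_norm hτ.le, hγτ, hγ0, add_sub_cancel_left, map_smul,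
    smul_eq_mul] at hint
  nlinarith [mul_le_mul_of_nonneg_left hℓ (by positivity : 0 ≤ K₂ * (τ * R))]

theorem abs_minAction_sub_le_of_support {p : Rd d → Rd d →L[ℝ] ℝ} {c₀ R : ℝ}
    (hLag : Continuous (uncurry Lag)) (hcoer : ∀ z u, ‖u‖ + c₀ ≤ Lag z u)
    (hsupp : ∀ z u, Lag z v + p z (u - v) ≤ Lag z u)
    (hlip : ∀ z, |Lag z v - Lag x v| ≤ K₁ * ‖z - x‖) (hp : ∀ z, ‖p z - p x‖ ≤ K₂ * ‖z - x‖)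
    (hK₁ : 0 ≤ K₁) (hK₂ : 0 ≤ K₂) (hR : Lag x v - c₀ ≤ R) (hτ : 0 < τ) :
    |minAction Lag τ x (x + τ • v) - τ * Lag x v| ≤ τ ^ 2 * (K₁ * R + K₂ * R * (R + ‖v‖)) := by
  have hvR : ‖v‖ ≤ R := by linarith [hcoer x v]
  have hupper : minAction Lag τ x (x + τ • v) ≤ τ * Lag x v + τ ^ 2 * (K₁ * ‖v‖) :=
    (minAction_le_curveAction hLag (c := c₀) (fun z u => by linarith [hcoer z u, norm_nonneg u])
      (piecewiseC1On_const_add_smul x v hτ) (by simp) rfl).trans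
      (curveAction_const_add_smul_le hLag hτ.le hK₁ fun z => by linarith [(abs_le.mp (hlip z)).2])
  have hlower := le_minAction hτ fun γ hγ hγ0 hγτ =>
    le_curveAction_of_support hLag hcoer hsupp (fun z => by linarith [(abs_le.mp (hlip z)).1])
      hp hK₁ hK₂ hR hτ hγ hγ0 hγτ
  have hR0 : 0 ≤ R := (norm_nonneg v).trans hvR
  have : K₁ * ‖v‖ ≤ K₁ * R + K₂ * R * (R + ‖v‖) := by
    have : 0 ≤ K₂ * R * (R + ‖v‖) := by positivity
    nlinarith [mul_le_mul_of_nonneg_left hvR hK₁]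
  rw [abs_le]
  constructor <;> nlinarith [sq_nonneg τ]

end ShortTime

structure LagrangianStripBounds {d : ℕ} (Lag : Rd d → Rd d → ℝ) (D c₀ K₁ K₂ R : ℝ) : Prop where
  continuous : Continuous (uncurry Lag)
  coercive : ∀ z u, ‖u‖ + c₀ ≤ Lag z u
  sub_le : ∀ z v, ‖v‖ ≤ D → Lag z v - c₀ ≤ R
  lipschitz : ∀ v, ‖v‖ ≤ D → ∀ z z', |Lag z' v - Lag z v| ≤ K₁ * ‖z' - z‖
  exists_support : ∀ v, ‖v‖ ≤ D → ∃ p : Rd d → Rd d →L[ℝ] ℝ,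
    (∀ z u, Lag z v + p z (u - v) ≤ Lag z u) ∧ ∀ z z', ‖p z' - p z‖ ≤ K₂ * ‖z' - z‖

theorem LagrangianStripBounds.abs_minAction_sub_le {d : ℕ} {Lag : Rd d → Rd d → ℝ}
    {D c₀ K₁ K₂ R τ : ℝ} (h : LagrangianStripBounds Lag D c₀ K₁ K₂ R) (hK₁ : 0 ≤ K₁)
    (hK₂ : 0 ≤ K₂) (hR : 0 ≤ R) (hτ : 0 < τ) {v : Rd d} (hv : ‖v‖ ≤ D) (x : Rd d) :
    |minAction Lag τ x (x + τ • v) - τ * Lag x v| ≤ τ ^ 2 * (K₁ * R + K₂ * R * (R + D)) := by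
  obtain ⟨p, hsupp, hp⟩ := h.exists_support v hv
  refine (abs_minAction_sub_le_of_support h.continuous h.coercive hsupp (h.lipschitz v hv x)
    (hp x) hK₁ hK₂ (h.sub_le x v hv) hτ).trans ?_
  gcongr

def liftLag {d : ℕ} (L : Torus d → Rd d → ℝ) : Rd d × Rd d → ℝ := fun q => L (projT q.1) q.2

section Tonelli

variable {d : ℕ} {L : Torus d → Rd d → ℝ}

theorem periodic_liftLag (k : Fin d → ℤ) :
    Periodic (liftLag L) (toRd fun i => (k i : ℝ), 0) := fun q => by
  simp [liftLag, projT_add_intCast]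

theorem liftLag_add_fderiv_le (hLC2 : TonelliC2 L) (hL1 : TonelliL1 L) (z v u : Rd d) :
    liftLag L (z, v) + fderiv ℝ (liftLag L) (z, v) (0, u - v) ≤ liftLag L (z, u) := by
  have hcd : ContDiff ℝ 2 fun w => liftLag L (z, w) := hLC2.comp (contDiff_const.prodMk contDiff_id)
  have hpos : ∀ w w' : Rd d, 0 ≤ iteratedFDeriv ℝ 2 (fun w => liftLag L (z, w)) w ![w', w'] := by
    intro w w'
    rcases eq_or_ne w' 0 with rfl | hw'
    · exact ((iteratedFDeriv ℝ 2 _ w).map_coord_zero 0 (by simp)).ge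
    · exact (hL1 (projT z) w w' hw').le
  have hfd : fderiv ℝ (fun w => liftLag L (z, w)) v =
      (fderiv ℝ (liftLag L) (z, v)).comp (ContinuousLinearMap.inr ℝ (Rd d) (Rd d)) :=
    ((hLC2.differentiable two_ne_zero (z, v)).hasFDerivAt.comp v
      (hasFDerivAt_prodMk_right z v)).fderiv
  simpa [hfd] using add_fderiv_sub_le_of_iteratedFDeriv_two_nonneg hcd hpos v u

end Tonelli

theorem CouplingF1.norm_sub_le {d : ℕ} {F : Torus d → PT d → ℝ} {Finf : ℝ}
    (hF1 : CouplingF1 F Finf) (m : PT d) (z z' : Rd d) :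
    ‖F (projT z') m - F (projT z) m‖ ≤ Finf * ‖z' - z‖ :=
  convex_univ.norm_image_sub_le_of_norm_fderiv_le
    (fun _ _ => ((hF1.2 m).1.differentiable two_ne_zero).differentiableAt)
    (fun w _ => (hF1.2 m).2.2 w) (mem_univ z) (mem_univ z')

theorem exists_lagrangianStripBounds {d : ℕ} {L : Torus d → Rd d → ℝ}
    {F : Torus d → PT d → ℝ} {Finf : ℝ} (hLC2 : TonelliC2 L) (hL1 : TonelliL1 L)
    (hL2 : TonelliL2 L) (hF1 : CouplingF1 F Finf) (D : ℝ) :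
    ∃ c₀ K₁ K₂ R : ℝ, 0 ≤ K₁ ∧ 0 ≤ K₂ ∧ 0 ≤ R ∧
      ∀ m, LagrangianStripBounds (LmR L F m) D c₀ K₁ K₂ R := by
  have hFinf := hF1.1
  have hF := hF1.2
  obtain ⟨C₁, hC₁⟩ := hL2 1 one_pos
  have hg : ContDiff ℝ 2 (liftLag L) := hLC2
  have hg1 : ContDiff ℝ 1 (fderiv ℝ (liftLag L)) := hg.fderiv_right le_rfl
  obtain ⟨A, hA, hAb⟩ := exists_bound_of_periodic hg.continuous periodic_liftLag D
  obtain ⟨M₁, hM₁, hM₁b⟩ := exists_bound_of_periodic (hg.continuous_fderiv two_ne_zero)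
    (fun k => (periodic_liftLag k).fderiv) D
  obtain ⟨M₂, hM₂, hM₂b⟩ := exists_bound_of_periodic (hg1.continuous_fderiv one_ne_zero)
    (fun k => (periodic_liftLag k).fderiv.fderiv) D
  refine ⟨C₁ - Finf, M₁ + Finf, M₂, A + |C₁| + 2 * Finf, by positivity, hM₂, by positivity,
    fun m => ⟨hg.continuous.add ((hF m).1.continuous.comp continuous_fst), fun z u => ?_,
      fun z v hv => ?_, fun v hv z z' => ?_, fun v hv => ?_⟩⟩
  · show ‖u‖ + (C₁ - Finf) ≤ L (projT z) u + F (projT z) m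
    linarith [hC₁ (projT z) u, (abs_le.mp ((hF m).2.1 (projT z))).1]
  · show L (projT z) v + F (projT z) m - (C₁ - Finf) ≤ A + |C₁| + 2 * Finf
    have hLv : L (projT z) v ≤ A := (Real.le_norm_self _).trans (hAb z v hv)
    linarith [(abs_le.mp ((hF m).2.1 (projT z))).2, neg_abs_le C₁]
  · have hFlip := hF1.norm_sub_le m z z'
    have hgLip := norm_sub_le_of_norm_fderiv_le_left (hg.differentiable two_ne_zero)
      (fun w => hM₁b w v hv) z z'
    calc |LmR L F m z' v - LmR L F m z v|
        = |(liftLag L (z', v) - liftLag L (z, v)) + (F (projT z') m - F (projT z) m)| := by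
          simp only [LmR, LmT, liftLag]
          ring_nf
      _ ≤ M₁ * ‖z' - z‖ + Finf * ‖z' - z‖ := (abs_add_le _ _).trans (add_le_add hgLip hFlip)
      _ = (M₁ + Finf) * ‖z' - z‖ := by ring
  · refine ⟨fun z => (fderiv ℝ (liftLag L) (z, v)).comp (ContinuousLinearMap.inr ℝ _ _),
      fun z u => ?_, fun z z' => ?_⟩
    · have := liftLag_add_fderiv_le hLC2 hL1 z v u
      simp only [LmR, LmT, liftLag, ContinuousLinearMap.comp_apply,
        ContinuousLinearMap.inr_apply] at this ⊢
      linarith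
    · rw [← ContinuousLinearMap.sub_comp]
      exact (ContinuousLinearMap.opNorm_comp_le _ _).trans <|
        (mul_le_of_le_one_right (norm_nonneg _) (ContinuousLinearMap.norm_inr_le_one ℝ _ _)).trans
          (norm_sub_le_of_norm_fderiv_le_left (hg1.differentiable one_ne_zero)
            (fun w => hM₂b w v hv) z z')

theorem stmt1_general
    {d : ℕ}
    (L : Torus d → Rd d → ℝ) (hLC2 : TonelliC2 L) (hL1 : TonelliL1 L) (hL2 : TonelliL2 L)
    (F : Torus d → PT d → ℝ) (Finf : ℝ) (hF1 : CouplingF1 F Finf) :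
    ∀ D : ℝ, 0 < D → ∃ C : ℝ, 0 < C ∧
      ∀ τ : ℝ, τ ∈ Ioc (0:ℝ) 1 → ∀ (m : PT d) (x y : Rd d), ‖x - y‖ ≤ τ * D →
        |minAction (LmR L F m) τ x y - discAction L F τ m x y| ≤ τ ^ 2 * C := by
  intro D hD
  obtain ⟨c₀, K₁, K₂, R, hK₁, hK₂, hR, hbounds⟩ :=
    exists_lagrangianStripBounds hLC2 hL1 hL2 hF1 D
  refine ⟨K₁ * R + K₂ * R * (R + D) + 1, by positivity, fun τ hτ m x y hxy => ?_⟩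
  set v := τ⁻¹ • (y - x)
  have hy : y = x + τ • v := by simp [v, smul_inv_smul₀ hτ.1.ne']
  have hv : ‖v‖ ≤ D := by
    rw [norm_smul, norm_inv, Real.norm_of_nonneg hτ.1.le, norm_sub_rev, inv_mul_le_iff₀ hτ.1]
    exact hxy
  have hdisc : discAction L F τ m x y = τ * LmR L F m x v := rfl
  calc |minAction (LmR L F m) τ x y - discAction L F τ m x y|
      = |minAction (LmR L F m) τ x (x + τ • v) - τ * LmR L F m x v| := by rw [hdisc, ← hy]
    _ ≤ τ ^ 2 * (K₁ * R + K₂ * R * (R + D)) :=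
      (hbounds m).abs_minAction_sub_le hK₁ hK₂ hR hτ.1 hv x
    _ ≤ τ ^ 2 * (K₁ * R + K₂ * R * (R + D) + 1) :=
      mul_le_mul_of_nonneg_left (by linarith) (sq_nonneg τ)

/-- `|h_τ^m(x,y) − 𝓛_{τ,m}(x,y)| ≤ τ² C̃(D)`. -/
theorem stmt1
    {d : ℕ} (hd : 1 ≤ d)
    (L : Torus d → Rd d → ℝ) (hLC2 : TonelliC2 L) (hL1 : TonelliL1 L) (hL2 : TonelliL2 L)
    (F : Torus d → PT d → ℝ) (Finf : ℝ) (hF1 : CouplingF1 F Finf) :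
    ∀ D : ℝ, 0 < D → ∃ C : ℝ, 0 < C ∧
      ∀ τ : ℝ, τ ∈ Ioc (0:ℝ) 1 → ∀ (m : PT d) (x y : Rd d), ‖x - y‖ ≤ τ * D →
        |minAction (LmR L F m) τ x y - discAction L F τ m x y| ≤ τ ^ 2 * C :=
  stmt1_general L hLC2 hL1 hL2 F Finf hF1
end
end

section
/- For each constant κ>0 there exist constants D_κ, C_κ > 0 such that for every ℤ^d-periodic Lipschitz function φ:ℝ^d→ℝ with Lipschitz constant at most κ, every τ ∈ (0,1], every m ∈ P(𝕋^d), and both choices A^m_τ = 𝓛_{τ,m} and A^m_τ = h_τ^m: (i) for every y ∈ ℝ^d, every x attaining the infimum inf_{x∈ℝ^d}(φ(x) + A^m_τ(x,y)) satisfies |y−x| ≤ τ D_κ; (ii) sup_{y∈ℝ^d} |inf_{x∈ℝ^d}(φ(x) + A^m_τ(x,y)) − φ(y)| ≤ τ C_κ. -/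
open MeasureTheory Set Filter

noncomputable section

/-!
Both actions are bounded below by `(κ + 1)|y - x| + τ c` and on the diagonal by `τ c'`, where
`c` comes from superlinearity of `L` with slope `κ + 1` and `c'` from the bound on `L(·, 0)`
over the compact torus (shifted by `∓F_∞`). For a `κ`-Lipschitz `φ` this gives
`φ(y) + τ c + |y - x| ≤ φ(x) + A(x, y)`, while the choice `x = y` shows that the infimum is at
most `φ(y) + τ c'`. Comparing the two bounds localises the minimisers and pins the infimum
within `O(τ)` of `φ(y)`. For `h_τ` the lower bound follows by integrating the bound on `L` along
a curve and using `|γ(τ) - γ(0)| ≤ ∫ |γ̇|`.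
-/

open Topology

theorem isOpenQuotientMap_projT {d : ℕ} : IsOpenQuotientMap (projT : Rd d → Torus d) :=
  (IsOpenQuotientMap.piMap fun _ => QuotientAddGroup.isOpenQuotientMap_mk).comp
    (PiLp.homeomorph 2 _).isOpenQuotientMap

theorem TonelliC2.bddAbove_range_zero {d : ℕ} {L : Torus d → Rd d → ℝ} (hL : TonelliC2 L) :
    BddAbove (range fun x : Torus d => L x 0) := by
  have hc : Continuous fun x : Torus d => L x 0 :=
    isOpenQuotientMap_projT.isQuotientMap.continuous_iff.mpr
      (hL.continuous.comp (continuous_id.prodMk continuous_const))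
  exact (isCompact_range hc).bddAbove

section Lagrangian

variable {d : ℕ} {L : Torus d → Rd d → ℝ} {F : Torus d → PT d → ℝ} {m : PT d} {Finf : ℝ}

theorem continuous_LmR (hL : TonelliC2 L) (hF : Continuous fun x : Rd d => F (projT x) m) :
    Continuous fun q : Rd d × Rd d => LmR L F m q.1 q.2 :=
  hL.continuous.add (hF.comp continuous_fst)

theorem le_LmR {K C : ℝ} (hL : ∀ x v, K * ‖v‖ + C ≤ L x v) (hF : ∀ x, |F x m| ≤ Finf)
    (x v : Rd d) : K * ‖v‖ + (C - Finf) ≤ LmR L F m x v := by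
  show _ ≤ L (projT x) v + F (projT x) m
  linarith [hL (projT x) v, neg_abs_le (F (projT x) m), hF (projT x)]

theorem LmR_zero_le {ℓ : ℝ} (hL : ∀ x, L x 0 ≤ ℓ) (hF : ∀ x, |F x m| ≤ Finf) (x : Rd d) :
    LmR L F m x 0 ≤ ℓ + Finf := by
  show L (projT x) 0 + F (projT x) m ≤ _
  linarith [hL (projT x), le_abs_self (F (projT x) m), hF (projT x)]

theorem discAction_eq (τ : ℝ) (x y : Rd d) :
    discAction L F τ m x y = τ * LmR L F m x (τ⁻¹ • (y - x)) :=
  rfl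

theorem le_discAction {K c τ : ℝ} (hlow : ∀ x v, K * ‖v‖ + c ≤ LmR L F m x v) (hτ : 0 < τ)
    (x y : Rd d) : K * ‖y - x‖ + τ * c ≤ discAction L F τ m x y := by
  have h := hlow x (τ⁻¹ • (y - x))
  rw [norm_smul, Real.norm_of_nonneg (inv_nonneg.2 hτ.le)] at h
  calc K * ‖y - x‖ + τ * c = τ * (K * (τ⁻¹ * ‖y - x‖) + c) := by field_simp
    _ ≤ discAction L F τ m x y := by rw [discAction_eq]; gcongr

theorem discAction_self (τ : ℝ) (y : Rd d) : discAction L F τ m y y = τ * LmR L F m y 0 := by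
  rw [discAction_eq, sub_self, smul_zero]

end Lagrangian

theorem exists_mem_Ioo_of_notMem_range {α : Type*} [LinearOrder α] :
    ∀ {n : ℕ} {s : Fin (n + 1) → α} {t : α}, t ∈ Ioo (s 0) (s (Fin.last n)) → t ∉ range s →
      ∃ i : Fin n, t ∈ Ioo (s i.castSucc) (s i.succ)
  | 0, _, _, ht, _ => absurd ht (by simp)
  | n + 1, s, t, ht, hts => by
    rcases lt_or_gt_of_ne fun h => hts ⟨_, h.symm⟩ with hlt | hgt
    · obtain ⟨i, hi⟩ := exists_mem_Ioo_of_notMem_range (s := s ∘ Fin.castSucc)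
        ⟨ht.1, hlt⟩ fun ⟨j, hj⟩ => hts ⟨_, hj⟩
      exact ⟨i.castSucc, hi⟩
    · exact ⟨Fin.last n, hgt, ht.2⟩

theorem ContDiffOn.exists_hasDerivAt_and_norm_deriv_le {E : Type*} [NormedAddCommGroup E]
    [NormedSpace ℝ E] {γ : ℝ → E} {p q : ℝ} (h : ContDiffOn ℝ 1 γ (Icc p q)) (hpq : p < q) :
    ∃ M, ∀ t ∈ Ioo p q, HasDerivAt γ (deriv γ t) t ∧ ‖deriv γ t‖ ≤ M := by
  obtain ⟨M, hM⟩ := isCompact_Icc.exists_bound_of_continuousOn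
    (h.continuousOn_derivWithin (uniqueDiffOn_Icc hpq) le_rfl)
  refine ⟨M, fun t ht => ?_⟩
  have hmem : Icc p q ∈ 𝓝 t := Icc_mem_nhds ht.1 ht.2
  refine ⟨((h.differentiableOn one_ne_zero t (Ioo_subset_Icc_self ht)).differentiableAt
    hmem).hasDerivAt, ?_⟩
  rw [← derivWithin_of_mem_nhds hmem]
  exact hM t (Ioo_subset_Icc_self ht)

theorem ae_restrict_Icc_mem_Ioo_diff {S : Set ℝ} (hS : S.Countable) (a b : ℝ) :
    ∀ᵐ t ∂volume.restrict (Icc a b), t ∈ Ioo a b \ S := by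
  have hnull := ((hS.union ((countable_singleton a).insert b))).ae_notMem volume
  filter_upwards [ae_restrict_mem measurableSet_Icc, ae_restrict_of_ae hnull] with t ht htS
  simp only [mem_union, mem_insert_iff, mem_singleton_iff, not_or] at htS
  exact ⟨⟨lt_of_le_of_ne ht.1 (Ne.symm htS.2.2), lt_of_le_of_ne ht.2 htS.2.1⟩, htS.1⟩

section Curves

variable {d : ℕ} {γ : ℝ → Rd d} {τ : ℝ}

theorem PiecewiseC1On.exists_hasDerivAt_off_finite (hγ : PiecewiseC1On γ τ) :
    ∃ S : Set ℝ, S.Finite ∧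
      ∃ M, ∀ t ∈ Ioo 0 τ \ S, HasDerivAt γ (deriv γ t) t ∧ ‖deriv γ t‖ ≤ M := by
  obtain ⟨-, n, s, hs, hs0, hsn, hpiece⟩ := hγ
  choose M hM using fun i : Fin n =>
    (hpiece i).exists_hasDerivAt_and_norm_deriv_le (hs Fin.castSucc_lt_succ)
  obtain ⟨B, hB⟩ := (finite_range M).bddAbove
  refine ⟨range s, finite_range s, B, fun t ⟨ht, hts⟩ => ?_⟩
  obtain ⟨i, hi⟩ := exists_mem_Ioo_of_notMem_range (hs0 ▸ hsn ▸ ht) hts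
  exact ⟨(hM i t hi).1, (hM i t hi).2.trans (hB (mem_range_self i))⟩

theorem PiecewiseC1On.le_curveAction {Lag : Rd d → Rd d → ℝ}
    (hLag : Continuous fun q : Rd d × Rd d => Lag q.1 q.2) {K c : ℝ} (hK : 0 ≤ K)
    (hlow : ∀ x v, K * ‖v‖ + c ≤ Lag x v) (hτ : 0 ≤ τ) (hγ : PiecewiseC1On γ τ) :
    K * ‖γ τ - γ 0‖ + τ * c ≤ curveAction Lag τ γ := by
  obtain ⟨S, hS, M, hM⟩ := hγ.exists_hasDerivAt_off_finite
  have hae := ae_restrict_Icc_mem_Ioo_diff hS.countable 0 τ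
  have hfin : volume (Icc 0 τ) ≠ ⊤ := measure_Icc_lt_top.ne
  have hderiv : IntegrableOn (deriv γ) (Icc 0 τ) :=
    Measure.integrableOn_of_bounded hfin (measurable_deriv γ).aestronglyMeasurable
      (hae.mono fun t ht => (hM t ht).2)
  have hLagInt : IntegrableOn (fun t => Lag (γ t) (deriv γ t)) (Icc 0 τ) := by
    obtain ⟨B, hB⟩ := ((isCompact_Icc.image_of_continuousOn hγ.1).prod
      (isCompact_closedBall (0 : Rd d) M)).exists_bound_of_continuousOn hLag.continuousOn
    refine Integrable.mono' (integrableOn_const (C := B) hfin) ?_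
      (hae.mono fun t ht => hB (γ t, deriv γ t) ?_)
    · exact hLag.measurable.comp_aemeasurable ((hγ.1.aemeasurable measurableSet_Icc).prodMk
        (measurable_deriv γ).aemeasurable) |>.aestronglyMeasurable
    · exact ⟨mem_image_of_mem γ (Ioo_subset_Icc_self ht.1), by simpa using (hM t ht).2⟩
  have hftc : ∫ t in Icc 0 τ, deriv γ t = γ τ - γ 0 := by
    rw [integral_Icc_eq_integral_Ioc, ← intervalIntegral.integral_of_le hτ]
    exact integral_eq_of_hasDerivAt_off_countable_of_le _ _ hτ hS.countable hγ.1
      (fun t ht => (hM t ht).1)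
      ((intervalIntegrable_iff_integrableOn_Ioc_of_le hτ).2 (hderiv.mono_set Ioc_subset_Icc_self))
  calc K * ‖γ τ - γ 0‖ + τ * c ≤ K * (∫ t in Icc 0 τ, ‖deriv γ t‖) + τ * c := by
        rw [← hftc]; gcongr; exact norm_integral_le_integral_norm _
    _ = ∫ t in Icc 0 τ, (K * ‖deriv γ t‖ + c) := by
        rw [integral_add (hderiv.norm.const_mul K) (integrableOn_const hfin), integral_const_mul,
          setIntegral_const, Real.volume_real_Icc_of_le hτ, sub_zero, smul_eq_mul]
    _ ≤ curveAction Lag τ γ :=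
        setIntegral_mono ((hderiv.norm.const_mul K).add (integrableOn_const hfin)) hLagInt
          fun t => hlow _ _

theorem ContDiff.piecewiseC1On (h : ContDiff ℝ 1 γ) (hτ : 0 < τ) : PiecewiseC1On γ τ := by
  refine ⟨h.continuous.continuousOn, 1, ![0, τ], ?_, rfl, rfl, fun _ => h.contDiffOn⟩
  intro i j hij
  fin_cases i <;> fin_cases j <;> simp_all

variable {Lag : Rd d → Rd d → ℝ} {K c : ℝ}

theorem le_minAction_s6 (hLag : Continuous fun q : Rd d × Rd d => Lag q.1 q.2) (hK : 0 ≤ K)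
    (hlow : ∀ x v, K * ‖v‖ + c ≤ Lag x v) (hτ : 0 < τ) (x y : Rd d) :
    K * ‖y - x‖ + τ * c ≤ minAction Lag τ x y := by
  have hsegment : PiecewiseC1On (fun t => x + (τ⁻¹ * t) • (y - x)) τ :=
    ContDiff.piecewiseC1On (by fun_prop) hτ
  refine le_csInf ⟨_, _, hsegment, by simp, ?_, rfl⟩ ?_
  · simp [inv_mul_cancel₀ hτ.ne']
  · rintro _ ⟨γ, hγ, rfl, rfl, rfl⟩
    exact hγ.le_curveAction hLag hK hlow hτ.le

theorem minAction_self_le (hLag : Continuous fun q : Rd d × Rd d => Lag q.1 q.2) (hK : 0 ≤ K)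
    (hlow : ∀ x v, K * ‖v‖ + c ≤ Lag x v) (hτ : 0 < τ) (y : Rd d) :
    minAction Lag τ y y ≤ τ * Lag y 0 := by
  refine csInf_le ⟨τ * c, ?_⟩ ⟨fun _ => y, contDiff_const.piecewiseC1On hτ, rfl, rfl, ?_⟩
  · rintro _ ⟨γ, hγ, h0, hτγ, rfl⟩
    have := hγ.le_curveAction hLag hK hlow hτ.le
    rw [h0, hτγ, sub_self, norm_zero, mul_zero, zero_add] at this
    exact this
  · simp [curveAction, Real.volume_real_Icc_of_le hτ.le]

end Curves

section Minimizers

variable {E : Type*} [SeminormedAddCommGroup E] {φ : E → ℝ} {A : E → E → ℝ} {κ a b : ℝ}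

theorem add_add_norm_sub_le (hφ : ∀ x y, |φ x - φ y| ≤ κ * ‖x - y‖)
    (hA : ∀ x y, (κ + 1) * ‖y - x‖ + a ≤ A x y) (x y : E) :
    φ y + a + ‖y - x‖ ≤ φ x + A x y := by
  have h := (abs_le.mp (hφ x y)).1
  rw [norm_sub_rev] at h
  linarith [hA x y]

theorem mem_lowerBounds_add (hφ : ∀ x y, |φ x - φ y| ≤ κ * ‖x - y‖)
    (hA : ∀ x y, (κ + 1) * ‖y - x‖ + a ≤ A x y) (y : E) :
    φ y + a ∈ lowerBounds { r : ℝ | ∃ x : E, r = φ x + A x y } := by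
  rintro _ ⟨x, rfl⟩
  linarith [add_add_norm_sub_le hφ hA x y, norm_nonneg (y - x)]

theorem add_le_sInf (hφ : ∀ x y, |φ x - φ y| ≤ κ * ‖x - y‖)
    (hA : ∀ x y, (κ + 1) * ‖y - x‖ + a ≤ A x y) (y : E) :
    φ y + a ≤ sInf { r : ℝ | ∃ x : E, r = φ x + A x y } :=
  le_csInf ⟨_, y, rfl⟩ (mem_lowerBounds_add hφ hA y)

theorem sInf_le_add (hφ : ∀ x y, |φ x - φ y| ≤ κ * ‖x - y‖)
    (hA : ∀ x y, (κ + 1) * ‖y - x‖ + a ≤ A x y) (hdiag : ∀ y, A y y ≤ b) (y : E) :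
    sInf { r : ℝ | ∃ x : E, r = φ x + A x y } ≤ φ y + b :=
  (csInf_le ⟨_, mem_lowerBounds_add hφ hA y⟩ ⟨y, rfl⟩).trans (by linarith [hdiag y])

theorem norm_sub_le_of_eq_sInf (hφ : ∀ x y, |φ x - φ y| ≤ κ * ‖x - y‖)
    (hA : ∀ x y, (κ + 1) * ‖y - x‖ + a ≤ A x y) (hdiag : ∀ y, A y y ≤ b) {x y : E}
    (hx : φ x + A x y = sInf { r : ℝ | ∃ x : E, r = φ x + A x y }) :
    ‖y - x‖ ≤ b - a := by
  linarith [add_add_norm_sub_le hφ hA x y, sInf_le_add hφ hA hdiag y]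

end Minimizers

theorem stmt6_general
    {d : ℕ}
    (L : Torus d → Rd d → ℝ) (hLC2 : TonelliC2 L) (hL2 : TonelliL2 L)
    (F : Torus d → PT d → ℝ) (Finf : ℝ) (hF1 : CouplingF1 F Finf) :
    ∀ κ : ℝ, 0 < κ → ∃ Dκ Cκ : ℝ, 0 < Dκ ∧ 0 < Cκ ∧
      ∀ A : ℝ → PT d → Rd d → Rd d → ℝ,
        ((A = fun τ m x y => discAction L F τ m x y) ∨
         (A = fun τ m x y => minAction (LmR L F m) τ x y)) →
        ∀ φ : Rd d → ℝ, ZPer φ → (∀ x y : Rd d, |φ x - φ y| ≤ κ * ‖x - y‖) →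
        ∀ τ : ℝ, τ ∈ Ioc (0:ℝ) 1 → ∀ m : PT d,
          (∀ y x : Rd d,
            φ x + A τ m x y = sInf { r : ℝ | ∃ x' : Rd d, r = φ x' + A τ m x' y } →
            ‖y - x‖ ≤ τ * Dκ) ∧
          (∀ y : Rd d,
            |sInf { r : ℝ | ∃ x : Rd d, r = φ x + A τ m x y } - φ y| ≤ τ * Cκ) := by
  intro κ hκ
  obtain ⟨C, hC⟩ := hL2 (κ + 1) (by linarith)
  obtain ⟨ℓ, hℓ⟩ := hLC2.bddAbove_range_zero
  set c := C - Finf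
  set c' := ℓ + Finf
  refine ⟨max (c' - c) 1, |c| + |c'| + 1, by positivity, by positivity, ?_⟩
  rintro A hA φ - hφ τ ⟨hτ, -⟩ m
  obtain ⟨hFsmooth, hFbdd, -⟩ := hF1.2 m
  have hLag := continuous_LmR hLC2 hFsmooth.continuous
  have hlow : ∀ x v, (κ + 1) * ‖v‖ + c ≤ LmR L F m x v := le_LmR hC hFbdd
  have hzero : ∀ y, τ * LmR L F m y 0 ≤ τ * c' := fun y =>
    mul_le_mul_of_nonneg_left (LmR_zero_le (fun x => hℓ (mem_range_self x)) hFbdd y) hτ.le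
  have hκ₁ : 0 ≤ κ + 1 := by linarith
  obtain ⟨hAlow, hAdiag⟩ : (∀ x y, (κ + 1) * ‖y - x‖ + τ * c ≤ A τ m x y) ∧
      ∀ y, A τ m y y ≤ τ * c' := by
    rcases hA with rfl | rfl
    · exact ⟨le_discAction hlow hτ, fun y => (discAction_self τ y).trans_le (hzero y)⟩
    · exact ⟨le_minAction_s6 hLag hκ₁ hlow hτ,
        fun y => (minAction_self_le hLag hκ₁ hlow hτ y).trans (hzero y)⟩
  refine ⟨fun y x hx => ?_, fun y => ?_⟩
  · calc ‖y - x‖ ≤ τ * c' - τ * c := norm_sub_le_of_eq_sInf hφ hAlow hAdiag hx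
      _ ≤ τ * max (c' - c) 1 := by rw [← mul_sub]; gcongr; exact le_max_left _ _
  · have h₁ := add_le_sInf hφ hAlow y
    have h₂ := sInf_le_add hφ hAlow hAdiag y
    rw [abs_le]
    constructor <;> nlinarith [neg_abs_le c, le_abs_self c', abs_nonneg c, abs_nonneg c']

/-- localization of minimizers and one-step estimate for Lipschitz periodic `φ`,
for both `A = 𝓛_{τ,m}` and `A = h_τ^m`. -/
theorem stmt6
    {d : ℕ} (hd : 1 ≤ d)
    (L : Torus d → Rd d → ℝ) (hLC2 : TonelliC2 L) (hL1 : TonelliL1 L) (hL2 : TonelliL2 L)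
    (F : Torus d → PT d → ℝ) (Finf : ℝ) (hF1 : CouplingF1 F Finf) :
    ∀ κ : ℝ, 0 < κ → ∃ Dκ Cκ : ℝ, 0 < Dκ ∧ 0 < Cκ ∧
      ∀ A : ℝ → PT d → Rd d → Rd d → ℝ,
        ((A = fun τ m x y => discAction L F τ m x y) ∨
         (A = fun τ m x y => minAction (LmR L F m) τ x y)) →
        ∀ φ : Rd d → ℝ, ZPer φ → (∀ x y : Rd d, |φ x - φ y| ≤ κ * ‖x - y‖) →
        ∀ τ : ℝ, τ ∈ Ioc (0:ℝ) 1 → ∀ m : PT d,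
          (∀ y x : Rd d,
            φ x + A τ m x y = sInf { r : ℝ | ∃ x' : Rd d, r = φ x' + A τ m x' y } →
            ‖y - x‖ ≤ τ * Dκ) ∧
          (∀ y : Rd d,
            |sInf { r : ℝ | ∃ x : Rd d, r = φ x + A τ m x y } - φ y| ≤ τ * Cκ) :=
  stmt6_general L hLC2 hL2 F Finf hF1
end
end

section
/- There exist constants R > 0 and τ₀ > 0 such that for every τ ∈ (0,τ₀), every m ∈ P(𝕋^d), and every continuous ℤ^d-periodic solution u of the discrete Lax–Oleinik equation u(y) + τ L̄(τ,m) = inf_{x∈ℝ^d}(u(x) + 𝓛_{τ,m}(x,y)) (for all y ∈ ℝ^d), the set 𝓝_τ(L_m,u) := {(x,v) ∈ 𝕋^d × ℝ^d : τ L_m(x,v) = u(x+τv) − u(x) + τ L̄(τ,m)} is contained in 𝕋^d × {v ∈ ℝ^d : |v| ≤ R}. -/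
open MeasureTheory Set Filter

noncomputable section

/-!
For `‖y - z‖ ≤ τ` the one-step competitor `x = z` in the Lax–Oleinik equation gives
`u y ≤ u z + τ (M - c)`, where `M` bounds `L_m` on `{‖v‖ ≤ 1}` and `c = L̄(τ,m)`; chaining such
steps bounds `u (x + τ v) - u x` by `(τ ‖v‖ + τ) (M - c)`. Evaluating the equation at a minimum of
`u` gives `c ≥ inf L_m`, so on `𝓝_τ(L_m,u)` the Lagrangian grows at most linearly in `‖v‖`, with
constants independent of `τ` and `m`; superlinearity then bounds `‖v‖`.
-/

section Chain

variable {E : Type*} [SeminormedAddCommGroup E] [NormedSpace ℝ E] {u : E → ℝ} {τ A : ℝ}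

lemma sub_le_of_norm_sub_le_succ_mul (hstep : ∀ y z, ‖y - z‖ ≤ τ → u y ≤ u z + τ * A)
    (n : ℕ) (p q : E) (hpq : ‖q - p‖ ≤ (n + 1) * τ) : u q - u p ≤ (n + 1) * τ * A := by
  induction n generalizing q with
  | zero =>
    have := hstep q p (by simpa using hpq)
    simp only [CharP.cast_eq_zero, zero_add, one_mul]
    linarith
  | succ n ih =>
    have hn : (0 : ℝ) < n + 2 := by positivity
    set w := p + ((n + 1 : ℝ) / (n + 2)) • (q - p)
    have hwp : ‖w - p‖ ≤ (n + 1) * τ := by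
      rw [add_sub_cancel_left, norm_smul, Real.norm_of_nonneg (by positivity), div_mul_eq_mul_div,
        div_le_iff₀ hn]
      push_cast at hpq
      nlinarith [norm_nonneg (q - p)]
    have hqw : ‖q - w‖ ≤ τ := by
      have : q - w = (1 / (n + 2 : ℝ)) • (q - p) := by
        rw [show (1 / (n + 2 : ℝ)) = 1 - (n + 1) / (n + 2) by field_simp; ring, sub_smul,
          one_smul, sub_sub]
      rw [this, norm_smul, Real.norm_of_nonneg (by positivity), div_mul_eq_mul_div, one_mul,
        div_le_iff₀ hn]
      push_cast at hpq
      linarith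
    push_cast
    linarith [ih w hwp, hstep q w hqw]

lemma sub_le_of_norm_sub_le (hτ : 0 < τ) (hstep : ∀ y z, ‖y - z‖ ≤ τ → u y ≤ u z + τ * A)
    (p q : E) : u q - u p ≤ (‖q - p‖ + τ) * A := by
  have hA : 0 ≤ A := by
    have := hstep p p (by simpa using hτ.le)
    exact nonneg_of_mul_nonneg_right (by linarith) hτ
  set n := ⌊‖q - p‖ / τ⌋₊
  have hlt : ‖q - p‖ ≤ (n + 1) * τ := by
    have := Nat.lt_floor_add_one (‖q - p‖ / τ)
    rw [div_lt_iff₀ hτ] at this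
    exact this.le
  have hle : (n + 1) * τ ≤ ‖q - p‖ + τ := by
    have := Nat.floor_le (div_nonneg (norm_nonneg (q - p)) hτ.le)
    rw [le_div_iff₀ hτ] at this
    linarith
  calc u q - u p ≤ (n + 1) * τ * A := sub_le_of_norm_sub_le_succ_mul hstep n p q hlt
    _ ≤ (‖q - p‖ + τ) * A := mul_le_mul_of_nonneg_right hle hA

end Chain

section Torus

variable {d : ℕ}

lemma projT_liftT (x : Torus d) : projT (liftT x) = x :=
  funext fun i => (AddCircle.equivIco (1 : ℝ) 0).symm_apply_apply (x i)

def unitCube (d : ℕ) : Set (Rd d) := WithLp.toLp 2 '' univ.pi fun _ => Icc 0 1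

lemma isCompact_unitCube : IsCompact (unitCube d) :=
  (isCompact_univ_pi fun _ => isCompact_Icc).image (PiLp.continuous_toLp 2 _)

lemma liftT_mem_unitCube (x : Torus d) : liftT x ∈ unitCube d :=
  ⟨_, fun i _ => Ico_subset_Icc_self (by simpa using (AddCircle.equivIco (1 : ℝ) 0 (x i)).2), rfl⟩

lemma exists_mem_unitCube_add_intVec (x : Rd d) :
    ∃ y ∈ unitCube d, ∃ k : Fin d → ℤ, x = y + toRd fun i => (k i : ℝ) := by
  refine ⟨toRd fun i => Int.fract (x i), ⟨_, fun i _ => ?_, rfl⟩, fun i => ⌊x i⌋, ?_⟩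
  · exact ⟨Int.fract_nonneg _, (Int.fract_lt_one _).le⟩
  · ext i
    exact (Int.fract_add_floor (x i)).symm

lemma ZPer.exists_forall_le {u : Rd d → ℝ} (hu : Continuous u) (hper : ZPer u) :
    ∃ y, ∀ x, u y ≤ u x := by
  obtain ⟨y, -, hy⟩ := isCompact_unitCube.exists_isMinOn ⟨_, liftT_mem_unitCube 0⟩ hu.continuousOn
  refine ⟨y, fun x => ?_⟩
  obtain ⟨x', hx', k, rfl⟩ := exists_mem_unitCube_add_intVec x
  rw [hper]
  exact hy hx'

lemma TonelliC2.exists_forall_le_of_norm_le_one {L : Torus d → Rd d → ℝ} (hL : TonelliC2 L) :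
    ∃ M, ∀ x v, ‖v‖ ≤ 1 → L x v ≤ M := by
  obtain ⟨M, hM⟩ := (isCompact_unitCube.prod (isCompact_closedBall (0 : Rd d) 1)).bddAbove_image
    hL.continuous.continuousOn
  refine ⟨M, fun x v hv => ?_⟩
  rw [← projT_liftT x]
  exact hM ⟨(liftT x, v), ⟨liftT_mem_unitCube x, by simpa using hv⟩, rfl⟩

end Torus

section Lagrangian

variable {d : ℕ} {L : Torus d → Rd d → ℝ} {F : Torus d → PT d → ℝ} {Finf : ℝ}

lemma CouplingF1.abs_le (hF : CouplingF1 F Finf) (x : Torus d) (m : PT d) : |F x m| ≤ Finf :=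
  (hF.2 m).2.1 x

lemma TonelliL2.exists_le_lmT (hL : TonelliL2 L) (hF : CouplingF1 F Finf) :
    ∃ C, ∀ m x v, C ≤ LmT L F m x v := by
  obtain ⟨C, hC⟩ := hL 1 one_pos
  refine ⟨C - Finf, fun m x v => ?_⟩
  have := hC x v
  have := neg_le_of_abs_le (hF.abs_le x m)
  simp only [LmT]
  linarith [norm_nonneg v]

lemma TonelliC2.exists_lmT_le (hL : TonelliC2 L) (hF : CouplingF1 F Finf) :
    ∃ M, ∀ m x v, ‖v‖ ≤ 1 → LmT L F m x v ≤ M := by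
  obtain ⟨M, hM⟩ := hL.exists_forall_le_of_norm_le_one
  exact ⟨M + Finf, fun m x v hv => add_le_add (hM x v hv) (le_of_abs_le (hF.abs_le x m))⟩

lemma TonelliL2.exists_norm_le (hL : TonelliL2 L) (hF : CouplingF1 F Finf) (A B : ℝ) :
    ∃ R, ∀ m x v, LmT L F m x v ≤ A * ‖v‖ + B → ‖v‖ ≤ R := by
  obtain ⟨C, hC⟩ := hL (|A| + 1) (by positivity)
  refine ⟨B + Finf - C, fun m x v hv => ?_⟩
  have := hC x v
  have := neg_le_of_abs_le (hF.abs_le x m)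
  have := mul_le_mul_of_nonneg_right (le_abs_self A) (norm_nonneg v)
  simp only [LmT] at hv
  linarith

end Lagrangian

def SolvesDiscreteLaxOleinik {d : ℕ} (L : Torus d → Rd d → ℝ) (F : Torus d → PT d → ℝ)
    (τ : ℝ) (m : PT d) (c : ℝ) (u : Rd d → ℝ) : Prop :=
  ∀ y, u y + τ * c = sInf {r : ℝ | ∃ x, r = u x + discAction L F τ m x y}

namespace SolvesDiscreteLaxOleinik

variable {d : ℕ} {L : Torus d → Rd d → ℝ} {F : Torus d → PT d → ℝ} {τ c C M : ℝ} {m : PT d}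
  {u : Rd d → ℝ}

lemma add_le (hLO : SolvesDiscreteLaxOleinik L F τ m c u) (hτ : 0 ≤ τ)
    (hC : ∀ x v, C ≤ LmT L F m x v) (hu : BddBelow (range u)) (x y : Rd d) :
    u y + τ * c ≤ u x + discAction L F τ m x y := by
  obtain ⟨b, hb⟩ := hu
  rw [hLO y]
  refine csInf_le ⟨b + τ * C, ?_⟩ ⟨x, rfl⟩
  rintro r ⟨z, rfl⟩
  exact add_le_add (hb ⟨z, rfl⟩) (mul_le_mul_of_nonneg_left (hC _ _) hτ)

lemma le_const (hLO : SolvesDiscreteLaxOleinik L F τ m c u) (hτ : 0 < τ)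
    (hC : ∀ x v, C ≤ LmT L F m x v) {y : Rd d} (hy : ∀ x, u y ≤ u x) : C ≤ c := by
  have : u y + τ * C ≤ u y + τ * c := by
    rw [hLO y]
    refine le_csInf ⟨_, y, rfl⟩ ?_
    rintro r ⟨x, rfl⟩
    exact add_le_add (hy x) (mul_le_mul_of_nonneg_left (hC _ _) hτ.le)
  exact le_of_mul_le_mul_left (by linarith) hτ

lemma le_add_mul_of_norm_sub_le (hLO : SolvesDiscreteLaxOleinik L F τ m c u) (hτ : 0 < τ)
    (hC : ∀ x v, C ≤ LmT L F m x v) (hM : ∀ x v, ‖v‖ ≤ 1 → LmT L F m x v ≤ M)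
    (hu : BddBelow (range u)) (y x : Rd d) (hyx : ‖y - x‖ ≤ τ) : u y ≤ u x + τ * (M - c) := by
  have hv : ‖τ⁻¹ • (y - x)‖ ≤ 1 := by
    rw [norm_smul, norm_inv, Real.norm_of_nonneg hτ.le]
    exact inv_mul_le_one_of_le₀ hyx hτ.le
  have hdisc : discAction L F τ m x y ≤ τ * M :=
    mul_le_mul_of_nonneg_left (hM (projT x) _ hv) hτ.le
  linarith [hLO.add_le hτ.le hC hu x y]

lemma lmR_le (hLO : SolvesDiscreteLaxOleinik L F τ m c u) (hτ : 0 < τ)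
    (hC : ∀ x v, C ≤ LmT L F m x v) (hM : ∀ x v, ‖v‖ ≤ 1 → LmT L F m x v ≤ M)
    (hu : Continuous u) (hper : ZPer u) (x v : Rd d)
    (hxv : τ * LmR L F m x v = u (x + τ • v) - u x + τ * c) :
    LmR L F m x v ≤ (M - C) * ‖v‖ + M := by
  obtain ⟨y, hy⟩ := hper.exists_forall_le hu
  have hCc := hLO.le_const hτ hC hy
  have hosc := sub_le_of_norm_sub_le hτ
    (hLO.le_add_mul_of_norm_sub_le hτ hC hM ⟨u y, by rintro _ ⟨x, rfl⟩; exact hy x⟩) x (x + τ • v)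
  rw [add_sub_cancel_left, norm_smul, Real.norm_of_nonneg hτ.le] at hosc
  have hLc : LmR L F m x v ≤ (M - c) * ‖v‖ + M := by
    refine le_of_mul_le_mul_left ?_ hτ
    calc τ * LmR L F m x v ≤ (τ * ‖v‖ + τ) * (M - c) + τ * c := by linarith
      _ = τ * ((M - c) * ‖v‖ + M) := by ring
  linarith [mul_le_mul_of_nonneg_right (sub_le_sub_left hCc M) (norm_nonneg v)]

end SolvesDiscreteLaxOleinik

theorem stmt8_general
    {d : ℕ}
    (L : Torus d → Rd d → ℝ) (hLC2 : TonelliC2 L) (hL2 : TonelliL2 L)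
    (F : Torus d → PT d → ℝ) (Finf : ℝ) (hF1 : CouplingF1 F Finf) :
    ∃ R τ₀ : ℝ, 0 < R ∧ 0 < τ₀ ∧
      ∀ τ : ℝ, τ ∈ Ioo 0 τ₀ → ∀ (m : PT d) (u : Rd d → ℝ),
        Continuous u → ZPer u →
        (∀ y : Rd d, u y + τ * LbarV L F τ m =
          sInf { r : ℝ | ∃ x : Rd d, r = u x + discAction L F τ m x y }) →
        ∀ x v : Rd d,
          τ * LmR L F m x v = u (x + τ • v) - u x + τ * LbarV L F τ m → ‖v‖ ≤ R := by
  obtain ⟨C, hC⟩ := hL2.exists_le_lmT hF1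
  obtain ⟨M, hM⟩ := hLC2.exists_lmT_le hF1
  obtain ⟨R, hR⟩ := hL2.exists_norm_le hF1 (M - C) M
  refine ⟨max R 1, 1, by positivity, one_pos, fun τ hτ m u hu hper hLO x v hxv => ?_⟩
  have hLm := SolvesDiscreteLaxOleinik.lmR_le hLO hτ.1 (hC m) (hM m) hu hper x v hxv
  exact (hR m _ v hLm).trans (le_max_left _ _)

/-- the set `𝓝_τ(L_m,u)` is contained in `𝕋^d × B_R`, uniformly in
`τ ∈ (0,τ₀)` and `m`. -/
theorem stmt8
    {d : ℕ} (hd : 1 ≤ d)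
    (L : Torus d → Rd d → ℝ) (hLC2 : TonelliC2 L) (hL1 : TonelliL1 L) (hL2 : TonelliL2 L)
    (F : Torus d → PT d → ℝ) (Finf : ℝ) (hF1 : CouplingF1 F Finf) :
    ∃ R τ₀ : ℝ, 0 < R ∧ 0 < τ₀ ∧
      ∀ τ : ℝ, τ ∈ Ioo 0 τ₀ → ∀ (m : PT d) (u : Rd d → ℝ),
        Continuous u → ZPer u →
        (∀ y : Rd d, u y + τ * LbarV L F τ m =
          sInf { r : ℝ | ∃ x : Rd d, r = u x + discAction L F τ m x y }) →
        ∀ x v : Rd d,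
          τ * LmR L F m x v = u (x + τ • v) - u x + τ * LbarV L F τ m → ‖v‖ ≤ R :=
  stmt8_general L hLC2 hL2 F Finf hF1
end
end
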